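/- arXiv:2305.13465 — 2 statements merged into one kernel-verified Lean document; each statement's English description precedes it below -/
import Mathlib

section
/- The largest eigenvalue of a symmetric tridiagonal matrix with zero diagonal and 0/1 off-diagonal entries equals 2·cos(π/(L+2)), where L is the maximal length of a consecutive run of 1's on the superdiagonal (with the convention that the matrix is the zero matrix if all off-diagonal entries are 0, in which case λ_max = 0 and L = 0). -/
/-!
Put `θ = π / (L + 2)` and use `sin ((k - 1) θ) + sin ((k + 1) θ) = 2 cos θ sin (k θ)`.

Lower bound: on a maximal run `x s = ⋯ = x (s + L - 1) = 1`, the vector with entries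
`sin θ, sin 2θ, …, sin ((L + 1) θ)` at `s, …, s + L` and `0` elsewhere is an eigenvector for
`2 cos θ`. Maximality forces the entries of `x` adjacent to the run to vanish, and
`sin 0 = sin ((L + 2) θ) = 0` closes the recurrence at both ends.

Upper bound: let `r m` be the length of the run of 1's ending just before `m`. Then `r m ≤ L`,
so `w m = sin ((r m + 1) θ)` is positive, and the recurrence gives `A w ≤ 2 cos θ • w`
entrywise. Pairing an eigenvector `v` for `μ` with `w` yields
`|μ| ⟪w, |v|⟫ ≤ ⟪A w, |v|⟫ ≤ 2 cos θ ⟪w, |v|⟫`, since `A` is symmetric and nonnegative.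
-/

open Real Matrix

theorem Matrix.mem_spectrum_iff_exists_mulVec_eq_smul {K ι : Type*} [Field K] [Fintype ι]
    [DecidableEq ι] (M : Matrix ι ι K) {μ : K} :
    μ ∈ spectrum K M ↔ ∃ v, v ≠ 0 ∧ M *ᵥ v = μ • v := by
  rw [← Matrix.spectrum_toLin', ← Module.End.hasEigenvalue_iff_mem_spectrum]
  constructor
  · intro h
    obtain ⟨v, hv⟩ := h.exists_hasEigenvector
    exact ⟨v, hv.2, by simpa using hv.apply_eq_smul⟩
  · rintro ⟨v, hv, h⟩
    exact Module.End.hasEigenvalue_of_hasEigenvector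
      ⟨by simpa [Module.End.mem_eigenspace_iff], hv⟩

theorem Matrix.abs_le_of_vecMul_le_smul {ι : Type*} [Fintype ι] {A : Matrix ι ι ℝ}
    (hA : ∀ i j, 0 ≤ A i j) {w : ι → ℝ} (hw : ∀ i, 0 < w i) {c : ℝ} (hwA : w ᵥ* A ≤ c • w)
    {v : ι → ℝ} (hv : v ≠ 0) {μ : ℝ} (hμ : A *ᵥ v = μ • v) : |μ| ≤ c := by
  obtain ⟨i, hi⟩ := Function.ne_iff.mp hv
  have hpos : 0 < ∑ j, w j * |v j| :=
    Finset.sum_pos' (fun j _ => mul_nonneg (hw j).le (abs_nonneg _))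
      ⟨i, Finset.mem_univ _, mul_pos (hw i) (abs_pos.2 hi)⟩
  refine le_of_mul_le_mul_right ?_ hpos
  calc |μ| * ∑ j, w j * |v j| = ∑ i, w i * |(A *ᵥ v) i| := by
        simp only [hμ, Finset.mul_sum, Pi.smul_apply, smul_eq_mul, abs_mul]
        exact Finset.sum_congr rfl fun _ _ => by ring
    _ ≤ ∑ i, w i * ∑ j, A i j * |v j| := by
        gcongr with i _
        · exact (hw i).le
        · calc |(A *ᵥ v) i| ≤ ∑ j, |A i j * v j| := Finset.abs_sum_le_sum_abs _ _
            _ = ∑ j, A i j * |v j| := by simp only [abs_mul, abs_of_nonneg (hA _ _)]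
    _ = ∑ j, (w ᵥ* A) j * |v j| := by
        simp only [vecMul, dotProduct, Finset.mul_sum, Finset.sum_mul]
        rw [Finset.sum_comm]
        exact Finset.sum_congr rfl fun _ _ => Finset.sum_congr rfl fun _ _ => by ring
    _ ≤ ∑ j, c * w j * |v j| := by
        gcongr with j _
        exact hwA j
    _ = c * ∑ j, w j * |v j| := by
        rw [Finset.mul_sum]
        exact Finset.sum_congr rfl fun _ _ => by ring

theorem Real.sin_nat_mul_add_sin_nat_add_two_mul (k : ℕ) (θ : ℝ) :
    sin (k * θ) + sin ((k + 2 : ℕ) * θ) = 2 * cos θ * sin ((k + 1 : ℕ) * θ) := by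
  have hk : (k : ℝ) * θ = (k + 1 : ℕ) * θ - θ := by push_cast; ring
  have hk2 : ((k + 2 : ℕ) : ℝ) * θ = (k + 1 : ℕ) * θ + θ := by push_cast; ring
  rw [hk, hk2, sin_sub, sin_add]
  ring

section SinePiDiv

variable {L : ℕ}

theorem sin_nat_mul_pi_div_nonneg {m : ℕ} (hm : m ≤ L + 2) : 0 ≤ sin (m * (π / (L + 2))) := by
  refine sin_nonneg_of_nonneg_of_le_pi (by positivity) ?_
  calc (m : ℝ) * (π / (L + 2)) ≤ (L + 2) * (π / (L + 2)) := by gcongr; exact_mod_cast hm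
    _ = π := mul_div_cancel₀ _ (by positivity)

theorem sin_nat_mul_pi_div_pos {m : ℕ} (h0 : 0 < m) (hm : m < L + 2) :
    0 < sin (m * (π / (L + 2))) := by
  refine sin_pos_of_pos_of_lt_pi (by positivity) ?_
  calc (m : ℝ) * (π / (L + 2)) < (L + 2) * (π / (L + 2)) := by gcongr; exact_mod_cast hm
    _ = π := mul_div_cancel₀ _ (by positivity)

theorem sin_add_two_mul_pi_div_add_two : sin ((L + 2) * (π / (L + 2))) = 0 := by
  rw [mul_div_cancel₀ _ (by positivity), sin_pi]

end SinePiDiv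

def symmTridiagonal {α : Type*} [Zero α] (n : ℕ) (x : ℕ → α) : Matrix (Fin n) (Fin n) α :=
  Matrix.of fun i j => if (j : ℕ) = i + 1 then x i else if (i : ℕ) = j + 1 then x j else 0

theorem symmTridiagonal_transpose {α : Type*} [Zero α] (n : ℕ) (x : ℕ → α) :
    (symmTridiagonal n x)ᵀ = symmTridiagonal n x := by
  ext i j
  simp only [transpose_apply, symmTridiagonal, of_apply]
  split_ifs <;> first | rfl | omega

theorem symmTridiagonal_nonneg {n : ℕ} {x : ℕ → ℝ} (hx : ∀ i, 0 ≤ x i) (i j : Fin n) :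
    0 ≤ symmTridiagonal n x i j := by
  simp only [symmTridiagonal, of_apply]
  split_ifs <;> first | exact hx _ | exact le_rfl

-- The `if` is needed because `j - 1` truncates to `0` in `ℕ` when `j = 0`.
theorem symmTridiagonal_mulVec {α : Type*} [NonUnitalNonAssocSemiring α] {n : ℕ} (x : ℕ → α)
    (g : ℕ → α) (hg : ∀ m, n ≤ m → g m = 0) (j : Fin n) :
    (symmTridiagonal n x *ᵥ fun k => g k) j
      = x j * g (j + 1) + if (j : ℕ) = 0 then 0 else x (j - 1) * g (j - 1) := by
  have hsplit : ∀ k : ℕ, (if k = j + 1 then x j else if (j : ℕ) = k + 1 then x k else 0) * g k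
      = (if k = j + 1 then x j * g k else 0)
        + (if (j : ℕ) = 0 then 0 else if k = j - 1 then x k * g k else 0) := by
    intro k
    split_ifs <;> first | omega | simp
  simp only [mulVec, dotProduct, symmTridiagonal, of_apply]
  rw [Fin.sum_univ_eq_sum_range
      (fun k => (if k = j + 1 then x j else if (j : ℕ) = k + 1 then x k else 0) * g k),
    Finset.sum_congr rfl fun k _ => hsplit k, Finset.sum_add_distrib, Finset.sum_ite_eq']
  congr 1
  · split_ifs with hj
    · rfl
    · rw [hg _ (by simpa using hj), mul_zero]
  · split_ifs with hj0
    · simp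
    · rw [Finset.sum_ite_eq', if_pos (by simp; omega)]

noncomputable def runLength (x : ℕ → ℝ) : ℕ → ℕ
  | 0 => 0
  | j + 1 => if x j = 1 then runLength x j + 1 else 0

theorem runLength_succ_of_eq_one {x : ℕ → ℝ} {j : ℕ} (h : x j = 1) :
    runLength x (j + 1) = runLength x j + 1 := by
  simp [runLength, h]

theorem runLength_le (x : ℕ → ℝ) (j : ℕ) : runLength x j ≤ j := by
  induction j with
  | zero => simp [runLength]
  | succ j ih => unfold runLength; split_ifs <;> omega

theorem apply_sub_runLength_add_eq_one (x : ℕ → ℝ) (j : ℕ) {i : ℕ} (hi : i < runLength x j) :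
    x (j - runLength x j + i) = 1 := by
  induction j generalizing i with
  | zero => simp [runLength] at hi
  | succ j ih =>
    by_cases h : x j = 1
    · rw [runLength_succ_of_eq_one h] at hi ⊢
      rcases Nat.lt_succ_iff_lt_or_eq.mp hi with hi | rfl
      · simpa [show j + 1 - (runLength x j + 1) = j - runLength x j by omega] using ih hi
      · have := runLength_le x j
        rwa [show j + 1 - (runLength x j + 1) + runLength x j = j by omega]
    · simp [runLength, h] at hi

def runLengths (n : ℕ) (x : ℕ → ℝ) : Set ℕ :=
  {k | ∃ s, s + k ≤ n - 1 ∧ ∀ i < k, x (s + i) = 1}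

section RunEigenvector

variable {n L s : ℕ} {x : ℕ → ℝ}

theorem exists_maximal_run (hx : ∀ i, x i = 0 ∨ x i = 1) (hL : IsGreatest (runLengths n x) L) :
    ∃ s, s + L ≤ n - 1 ∧ (∀ i < L, x (s + i) = 1) ∧ (0 < s → x (s - 1) = 0) ∧
      (s + L + 1 < n → x (s + L) = 0) := by
  obtain ⟨⟨s, hsn, hrun⟩, hmax⟩ := hL
  have hlonger : ∀ t, t + (L + 1) ≤ n - 1 → (∀ i < L + 1, x (t + i) = 1) → False :=
    fun t ht h => by have := hmax ⟨t, ht, h⟩; omega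
  refine ⟨s, hsn, hrun, fun hs => ?_, fun hs => ?_⟩
  · refine (hx _).resolve_right fun h1 => hlonger (s - 1) (by omega) fun i hi => ?_
    rcases i with _ | i
    · simpa using h1
    · rw [show s - 1 + (i + 1) = s + i by omega]
      exact hrun i (by omega)
  · refine (hx _).resolve_right fun h1 => hlonger s (by omega) fun i hi => ?_
    rcases Nat.lt_succ_iff_lt_or_eq.mp hi with hi | rfl
    · exact hrun i hi
    · exact h1

noncomputable def runSine (s L : ℕ) (m : ℕ) : ℝ :=
  if s ≤ m ∧ m ≤ s + L then sin ((m - s + 1 : ℕ) * (π / (L + 2))) else 0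

theorem runSine_self_pos (s L : ℕ) : 0 < runSine s L s := by
  rw [runSine, if_pos ⟨le_rfl, by omega⟩]
  exact sin_nat_mul_pi_div_pos (by omega) (by omega)

variable (hrun : ∀ i < L, x (s + i) = 1)
include hrun

theorem mul_runSine_succ (hleft : 0 < s → x (s - 1) = 0) (j : ℕ) :
    x j * runSine s L (j + 1) =
      if s ≤ j ∧ j ≤ s + L then sin ((j - s + 2 : ℕ) * (π / (L + 2))) else 0 := by
  unfold runSine
  by_cases hj : s ≤ j ∧ j ≤ s + L
  · rw [if_pos hj]
    rcases hj.2.lt_or_eq with hlt | rfl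
    · have hxj : x j = 1 := by simpa [show s + (j - s) = j by omega] using hrun (j - s) (by omega)
      rw [if_pos (by omega), hxj, one_mul, show j + 1 - s + 1 = j - s + 2 by omega]
    · rw [if_neg (by omega), mul_zero, show s + L - s + 2 = L + 2 by omega]
      push_cast
      exact sin_add_two_mul_pi_div_add_two.symm
  · rw [if_neg hj]
    by_cases hs : j + 1 = s
    · rw [show j = s - 1 by omega, hleft (by omega), zero_mul]
    · rw [if_neg (by omega), mul_zero]

theorem mul_runSine_pred (hright : s + L + 1 < n → x (s + L) = 0) {j : ℕ} (hj : j < n) :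
    (if j = 0 then 0 else x (j - 1) * runSine s L (j - 1)) =
      if s ≤ j ∧ j ≤ s + L then sin ((j - s : ℕ) * (π / (L + 2))) else 0 := by
  unfold runSine
  by_cases hjs : s ≤ j ∧ j ≤ s + L
  · rw [if_pos hjs]
    rcases hjs.1.lt_or_eq with hlt | rfl
    · have hxj : x (j - 1) = 1 := by
        simpa [show s + (j - 1 - s) = j - 1 by omega] using hrun (j - 1 - s) (by omega)
      rw [if_neg (by omega), if_pos (by omega), hxj, one_mul, show j - 1 - s + 1 = j - s by omega]
    · rw [Nat.sub_self, Nat.cast_zero, zero_mul, sin_zero]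
      split_ifs <;> first | rfl | omega | simp
  · rw [if_neg hjs]
    split_ifs with hj0 hprev
    · rfl
    · rw [show j - 1 = s + L by omega, hright (by omega), zero_mul]
    · rw [mul_zero]

theorem symmTridiagonal_mulVec_runSine (hsn : s + L < n) (hleft : 0 < s → x (s - 1) = 0)
    (hright : s + L + 1 < n → x (s + L) = 0) :
    symmTridiagonal n x *ᵥ (fun k : Fin n => runSine s L k) =
      (2 * cos (π / (L + 2))) • fun k : Fin n => runSine s L k := by
  ext j
  have hvanish : ∀ m, n ≤ m → runSine s L m = 0 := fun m hm => if_neg (by omega)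
  rw [symmTridiagonal_mulVec x _ hvanish j, mul_runSine_succ hrun hleft,
    mul_runSine_pred hrun hright j.isLt, Pi.smul_apply, smul_eq_mul, runSine]
  split_ifs with hj
  · rw [add_comm, sin_nat_mul_add_sin_nat_add_two_mul]
  · simp

end RunEigenvector

section Supervector

variable {n L : ℕ} {x : ℕ → ℝ}

theorem runLength_le_of_mem_upperBounds (hL : L ∈ upperBounds (runLengths n x)) {m : ℕ}
    (hm : m < n) : runLength x m ≤ L :=
  hL ⟨m - runLength x m, by have := runLength_le x m; omega,
    fun _ hi => apply_sub_runLength_add_eq_one x m hi⟩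

noncomputable def runLengthSine (n : ℕ) (x : ℕ → ℝ) (L m : ℕ) : ℝ :=
  if m < n then sin ((runLength x m + 1 : ℕ) * (π / (L + 2))) else 0

theorem runLengthSine_pos (hL : L ∈ upperBounds (runLengths n x)) {m : ℕ} (hm : m < n) :
    0 < runLengthSine n x L m := by
  rw [runLengthSine, if_pos hm]
  have := runLength_le_of_mem_upperBounds hL hm
  exact sin_nat_mul_pi_div_pos (by omega) (by omega)

theorem symmTridiagonal_mulVec_runLengthSine_le (hx : ∀ i, x i = 0 ∨ x i = 1)
    (hL : L ∈ upperBounds (runLengths n x)) :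
    symmTridiagonal n x *ᵥ (fun k : Fin n => runLengthSine n x L k) ≤
      (2 * cos (π / (L + 2))) • fun k : Fin n => runLengthSine n x L k := by
  intro j
  have hr := runLength_le_of_mem_upperBounds hL j.isLt
  have hnext : x j * runLengthSine n x L (j + 1) ≤
      sin ((runLength x j + 2 : ℕ) * (π / (L + 2))) := by
    have h0 := sin_nat_mul_pi_div_nonneg (L := L) (m := runLength x j + 2) (by omega)
    rcases hx j with h | h
    · rwa [h, zero_mul]
    · rw [h, one_mul, runLengthSine]
      split_ifs
      · rw [runLength_succ_of_eq_one h]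
      · exact h0
  have hprev : (if (j : ℕ) = 0 then 0 else x (j - 1) * runLengthSine n x L (j - 1)) ≤
      sin ((runLength x j : ℕ) * (π / (L + 2))) := by
    have h0 := sin_nat_mul_pi_div_nonneg (L := L) (m := runLength x j) (by omega)
    split_ifs with hj0
    · exact h0
    rcases hx (j - 1) with h | h
    · rwa [h, zero_mul]
    · have hsucc := runLength_succ_of_eq_one h
      rw [Nat.sub_add_cancel (by omega)] at hsucc
      rw [h, one_mul, runLengthSine, if_pos (by omega), ← hsucc]
  have hvanish : ∀ m, n ≤ m → runLengthSine n x L m = 0 := fun m hm => if_neg (by omega)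
  have hself : runLengthSine n x L j = sin ((runLength x j + 1 : ℕ) * (π / (L + 2))) :=
    if_pos j.isLt
  rw [symmTridiagonal_mulVec x _ hvanish j, Pi.smul_apply, smul_eq_mul, hself,
    ← sin_nat_mul_add_sin_nat_add_two_mul, add_comm (sin _)]
  exact add_le_add hnext hprev

end Supervector

/-- The largest eigenvalue of a symmetric tridiagonal matrix with zero diagonal
and 0/1 off-diagonal entries `x_i` equals `2·cos(π/(L+2))`, where `L` is the
maximal length of a consecutive run of 1's among the off-diagonal entries
(`L = 0` if all `x_i` are 0, in which case the matrix is zero and the largest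
eigenvalue is `2·cos(π/2) = 0`). -/
theorem tridiag_zero_one_largest_eigenvalue (n : ℕ) (hn : 1 ≤ n)
    (x : ℕ → ℝ) (hx : ∀ i, x i = 0 ∨ x i = 1)
    (A : Matrix (Fin n) (Fin n) ℝ)
    (hA : ∀ i j : Fin n, A i j =
      if (j : ℕ) = i + 1 then x i
      else if (i : ℕ) = j + 1 then x j
      else 0)
    (L : ℕ)
    (hL : IsGreatest {k : ℕ | ∃ s, s + k ≤ n - 1 ∧ ∀ i < k, x (s + i) = 1} L) :
    IsGreatest (spectrum ℝ A) (2 * Real.cos (π / (L + 2))) := by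
  obtain rfl : A = symmTridiagonal n x := Matrix.ext hA
  refine ⟨?_, fun μ hμ => ?_⟩
  · obtain ⟨s, hsn, hrun, hleft, hright⟩ := exists_maximal_run hx hL
    refine (mem_spectrum_iff_exists_mulVec_eq_smul _).2
      ⟨_, fun h => ?_, symmTridiagonal_mulVec_runSine hrun (by omega) hleft hright⟩
    exact (runSine_self_pos s L).ne' (congrFun h ⟨s, by omega⟩)
  · obtain ⟨v, hv, hvμ⟩ := (mem_spectrum_iff_exists_mulVec_eq_smul _).1 hμ
    have hnonneg : ∀ i, 0 ≤ x i := fun i => by rcases hx i with h | h <;> simp [h]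
    refine (le_abs_self μ).trans (abs_le_of_vecMul_le_smul (symmTridiagonal_nonneg hnonneg)
      (fun i => runLengthSine_pos hL.2 i.isLt) ?_ hv hvμ)
    rw [← mulVec_transpose, symmTridiagonal_transpose]
    exact symmTridiagonal_mulVec_runLengthSine_le hx hL.2
end

section
/- For 0 < p < 1, the asymptotic solution of the equation (2δ^{3/2}/g³)·e^{−g/√δ} = 1/N in δ as N → ∞ satisfies δ ~ (g/ln N)², i.e., δ·(ln N)²/g² → 1, where g > 0 is a fixed constant. -/
/-!
Put `u = g / √δ`. Since `δ^{3/2}/g³ = 1/u³`, the equation reads `N = u³ eᵘ / 2`, so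
`ln N = u + 3 ln u - ln 2`. As `δ → 0` we have `u → ∞`, hence `ln N / u → 1`, and
`δ (ln N)² / g² = (ln N / u)² → 1`.
-/

open Real Filter

lemma rpow_three_halves_eq_sqrt_pow {x : ℝ} (hx : 0 ≤ x) : x ^ ((3 : ℝ) / 2) = √x ^ 3 := by
  rw [sqrt_eq_rpow, ← rpow_natCast, ← rpow_mul hx]
  norm_num

lemma two_mul_rpow_three_halves_div_eq {δ g : ℝ} (hδ : 0 < δ) (hg : 0 < g) :
    2 * δ ^ ((3 : ℝ) / 2) / g ^ 3 = 2 / (g / √δ) ^ 3 := by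
  have hs : 0 < √δ := sqrt_pos.2 hδ
  rw [rpow_three_halves_eq_sqrt_pow hδ.le, div_pow]
  field_simp

lemma log_eq_of_two_div_cube_mul_exp_neg_eq {u x : ℝ} (hu : 0 < u)
    (h : 2 / u ^ 3 * exp (-u) = 1 / x) : log x = u + 3 * log u - log 2 := by
  have hlog := congrArg log h
  rw [log_mul (by positivity) (exp_ne_zero _), log_exp, log_div two_ne_zero (by positivity),
    log_pow, one_div, log_inv] at hlog
  push_cast at hlog
  linarith

lemma tendsto_div_sqrt_atTop {α : Type*} {l : Filter α} {f : α → ℝ} {c : ℝ} (hc : 0 < c)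
    (hf : Tendsto f l (nhds 0)) (hpos : ∀ a, 0 < f a) :
    Tendsto (fun a => c / √(f a)) l atTop := by
  have hsqrt : Tendsto (fun a => √(f a)) l (nhdsWithin 0 (Set.Ioi 0)) :=
    tendsto_nhdsWithin_of_tendsto_nhds_of_eventually_within _
      (by simpa [Function.comp_def] using (continuous_sqrt.tendsto 0).comp hf)
      (Eventually.of_forall fun a => sqrt_pos.2 (hpos a))
  simpa only [div_eq_mul_inv, Function.comp_def] using (tendsto_inv_nhdsGT_zero.const_mul_atTop hc).comp hsqrt

lemma tendsto_add_three_mul_log_sub_div_self {α : Type*} {l : Filter α} {u : α → ℝ} (c : ℝ)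
    (hu : Tendsto u l atTop) :
    Tendsto (fun a => (u a + 3 * log (u a) - c) / u a) l (nhds 1) := by
  have hlog : Tendsto (fun a => log (u a) / u a) l (nhds 0) := by
    simpa [Function.comp_def] using (tendsto_pow_log_div_mul_add_atTop 1 0 1 one_ne_zero).comp hu
  have hconst : Tendsto (fun a => c / u a) l (nhds 0) := tendsto_const_nhds.div_atTop hu
  have hsum := ((hlog.const_mul 3).const_add 1).sub hconst
  rw [mul_zero, add_zero, sub_zero] at hsum
  refine hsum.congr' ?_
  filter_upwards [hu.eventually_gt_atTop 0] with a ha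
  field_simp

lemma mul_sq_div_sq_eq_sq_div_div_sqrt {δ g : ℝ} (L : ℝ) (hδ : 0 ≤ δ) :
    δ * L ^ 2 / g ^ 2 = (L / (g / √δ)) ^ 2 := by
  rw [div_div_eq_mul_div, div_pow, mul_pow, sq_sqrt hδ]
  ring

theorem lifshitz_gap_asymptotics_general (g : ℝ) (hg : 0 < g)
    (δ : ℕ → ℝ) (hpos : ∀ N, 0 < δ N)
    (heq : ∀ N : ℕ, 1 ≤ N →
      (2 * (δ N) ^ ((3 : ℝ) / 2) / g ^ 3) * Real.exp (-g / Real.sqrt (δ N)) =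
        1 / N)
    (hto0 : Tendsto δ atTop (nhds 0)) :
    Tendsto (fun N : ℕ => δ N * (Real.log N) ^ 2 / g ^ 2) atTop (nhds 1) := by
  set u : ℕ → ℝ := fun N => g / √(δ N)
  have hlog : ∀ N : ℕ, 1 ≤ N → log N = u N + 3 * log (u N) - log 2 := fun N hN =>
    log_eq_of_two_div_cube_mul_exp_neg_eq (div_pos hg (sqrt_pos.2 (hpos N))) (by
      rw [← two_mul_rpow_three_halves_div_eq (hpos N) hg, ← neg_div]
      exact heq N hN)
  have hratio : Tendsto (fun N : ℕ => log N / u N) atTop (nhds 1) :=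
    (tendsto_add_three_mul_log_sub_div_self (log 2)
      (tendsto_div_sqrt_atTop hg hto0 hpos)).congr' <| by
        filter_upwards [eventually_ge_atTop 1] with N hN
        rw [hlog N hN]
  simpa only [mul_sq_div_sq_eq_sq_div_div_sqrt _ (hpos _).le, one_pow] using hratio.pow 2

/-- Fix `g > 0` (and `0 < p < 1`). If `δ(N)` solves
`(2δ^{3/2}/g³)·e^{−g/√δ} = 1/N` with `δ(N) → 0`, then `δ(N) ~ (g/ln N)²`,
i.e. `δ(N)·(ln N)²/g² → 1` as `N → ∞`. -/
theorem lifshitz_gap_asymptotics (p g : ℝ) (hp0 : 0 < p) (hp1 : p < 1) (hg : 0 < g)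
    (δ : ℕ → ℝ) (hpos : ∀ N, 0 < δ N)
    (heq : ∀ N : ℕ, 1 ≤ N →
      (2 * (δ N) ^ ((3 : ℝ) / 2) / g ^ 3) * Real.exp (-g / Real.sqrt (δ N)) =
        1 / N)
    (hto0 : Tendsto δ atTop (nhds 0)) :
    Tendsto (fun N : ℕ => δ N * (Real.log N) ^ 2 / g ^ 2) atTop (nhds 1) :=
  lifshitz_gap_asymptotics_general g hg δ hpos heq hto0
end
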